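/- arXiv:1708.07617 — 2 statements merged into one kernel-verified Lean document; each statement's English description precedes it below -/
import Mathlib

section
/- Let A be a ℂ-algebra with elements a, b, c, d satisfying the SL₂^q relations: ba = qab, ca = qac, db = qbd, dc = qcd, bc = cb, ad − q⁻¹bc = da − qbc, and ad − q⁻¹bc = 1. Then for the induced action ρ₂ on degree-2 homogeneous polynomials in q-commuting variables X, Y (with YX = qXY, X and Y commuting with A), one has Trace ρ₂(a,b;c,d) = (a + d)² − 1. -/
/-!
Only three diagonal coefficients occur: `X² ↦ (aX + bY)²` contributes `a²`, `Y² ↦ (cX + dY)²`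
contributes `d²`, and `XY ↦ (aX + bY)(cX + dY)` contributes `ad + q bc`, the factor `q` coming
from `YX = qXY`. The two determinant relations give `da − q bc = 1`, so
`a² + ad + q bc + d² = a² + ad + da + d² − 1 = (a + d)² − 1`.
-/

/-- The quantum `A`-plane `A[X,Y]^q` in degreewise coordinates: an element is a finitely
supported family of coefficients in `A`, indexed by the monomials `X^i Y^j`. -/
abbrev QPlane (A : Type*) [Ring A] := (ℕ × ℕ) →₀ A

/-- Multiplication in the quantum plane: the variables `X`, `Y` commute with all
coefficients in `A` and satisfy `Y X = q X Y`, so that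
`(α X^i Y^j)(β X^k Y^l) = q^{jk} (α β) X^{i+k} Y^{j+l}`. -/
noncomputable def qmul {A : Type*} [Ring A] [Algebra ℂ A] (q : ℂ)
    (f g : QPlane A) : QPlane A :=
  f.sum fun p α => g.sum fun r β =>
    Finsupp.single (p.1 + r.1, p.2 + r.2) (q ^ (p.2 * r.1) • (α * β))

/-- Powers in the quantum plane. -/
noncomputable def qpow {A : Type*} [Ring A] [Algebra ℂ A] (q : ℂ)
    (f : QPlane A) : ℕ → QPlane A
  | 0 => Finsupp.single (0, 0) 1
  | m + 1 => qmul q f (qpow q f m)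

/-- The image of the basis monomial `X^{n−u} Y^u` under the action `ρ_n` of the matrix
`(a, b; c, d)`, which sends `X ↦ aX + bY`, `Y ↦ cX + dY` and is extended
multiplicatively: it is `(aX + bY)^{n−u} (cX + dY)^u`. -/
noncomputable def rhoImage {A : Type*} [Ring A] [Algebra ℂ A] (q : ℂ)
    (a b c d : A) (n u : ℕ) : QPlane A :=
  qmul q
    (qpow q (Finsupp.single (1, 0) a + Finsupp.single (0, 1) b) (n - u))
    (qpow q (Finsupp.single (1, 0) c + Finsupp.single (0, 1) d) u)

/-- The trace of `ρ_n(a, b; c, d)`: the sum over `u` of the coefficient of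
`X^{n−u} Y^u` in the image of `X^{n−u} Y^u`. -/
noncomputable def traceRho {A : Type*} [Ring A] [Algebra ℂ A] (q : ℂ)
    (a b c d : A) (n : ℕ) : A :=
  ∑ u ∈ Finset.range (n + 1), rhoImage q a b c d n u (n - u, u)

section QuantumPlane

variable {A : Type*} [Ring A] [Algebra ℂ A] (q : ℂ)

open Finsupp

theorem qmul_single_single (p r : ℕ × ℕ) (α β : A) :
    qmul q (single p α) (single r β) = single (p.1 + r.1, p.2 + r.2) (q ^ (p.2 * r.1) • (α * β)) := by
  simp [qmul]

theorem qmul_add_left (f g h : QPlane A) : qmul q (f + g) h = qmul q f h + qmul q g h :=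
  sum_add_index' (fun _ => by simp) (fun _ _ _ => by simp [add_mul, smul_add, sum_add])

theorem qmul_add_right (f g h : QPlane A) : qmul q f (g + h) = qmul q f g + qmul q f h := by
  rw [qmul, qmul, qmul, ← sum_add]
  refine sum_congr fun _ _ => ?_
  exact sum_add_index' (fun _ => by simp) (fun _ _ _ => by simp [mul_add, smul_add])

theorem qmul_one_left (f : QPlane A) : qmul q (single (0, 0) 1) f = f := by
  induction f using Finsupp.induction_linear with
  | zero => simp [qmul]
  | add f g hf hg => rw [qmul_add_right, hf, hg]
  | single p α => simp [qmul_single_single]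

theorem qmul_one_right (f : QPlane A) : qmul q f (single (0, 0) 1) = f := by
  induction f using Finsupp.induction_linear with
  | zero => exact sum_zero_index
  | add f g hf hg => rw [qmul_add_left, hf, hg]
  | single p α => simp [qmul_single_single]

theorem qpow_zero (f : QPlane A) : qpow q f 0 = single (0, 0) 1 := rfl

theorem qpow_one (f : QPlane A) : qpow q f 1 = f :=
  qmul_one_right q f

theorem qpow_two (f : QPlane A) : qpow q f 2 = qmul q f f := by
  rw [qpow, qpow_one]

theorem qmul_linear_linear (a b c d : A) :
    qmul q (single (1, 0) a + single (0, 1) b) (single (1, 0) c + single (0, 1) d) =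
      single (2, 0) (a * c) + single (1, 1) (a * d + q • (b * c)) + single (0, 2) (b * d) := by
  simp only [qmul_add_left, qmul_add_right, qmul_single_single]
  norm_num
  abel

theorem traceRho_two_eq (a b c d : A) :
    traceRho q a b c d 2 = a * a + (a * d + q • (b * c)) + d * d := by
  simp [traceRho, rhoImage, Finset.sum_range_succ, qpow_zero, qpow_one, qpow_two, qmul_one_left,
    qmul_one_right, qmul_linear_linear]

end QuantumPlane

theorem traceRho_two_general {A : Type*} [Ring A] [Algebra ℂ A] (q : ℂ) (a b c d : A)
    (hdet : a * d - q⁻¹ • (b * c) = 1)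
    (hdet' : a * d - q⁻¹ • (b * c) = d * a - q • (b * c)) :
    traceRho q a b c d 2 = (a + d) ^ 2 - 1 := by
  have hda : d * a = 1 + q • (b * c) := eq_add_of_sub_eq (hdet'.symm.trans hdet)
  rw [traceRho_two_eq, sq, add_mul, mul_add, mul_add, hda]
  abel

/-- For `(a, b; c, d) ∈ SL₂^q(A)`, the trace of `ρ₂` equals `(a + d)² − 1`. -/
theorem traceRho_two {A : Type*} [Ring A] [Algebra ℂ A] (q : ℂ) (a b c d : A)
    (hba : b * a = q • (a * b)) (hca : c * a = q • (a * c))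
    (hdb : d * b = q • (b * d)) (hdc : d * c = q • (c * d))
    (hbc : b * c = c * b)
    (hdet : a * d - q⁻¹ • (b * c) = 1)
    (hdet' : a * d - q⁻¹ • (b * c) = d * a - q • (b * c)) :
    traceRho q a b c d 2 = (a + d) ^ 2 - 1 :=
  traceRho_two_general q a b c d hdet hdet'
end

section
/- Let A be a ℂ-algebra with ad − q⁻¹bc = 1, ba = qab, ca = qac, db = qbd, dc = qcd, bc = cb, and ad − q⁻¹bc = da − qbc. Then Trace ρ_n(a,b;c,d) = S_n(a + d) for every n ≥ 0, where ρ_n is the induced action on degree-n homogeneous polynomials of the quantum plane and S_n is the n-th normalized Chebyshev polynomial of the second kind. -/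
/-- The normalized Chebyshev polynomial of the second kind, evaluated in a ring:
`S_{n+1}(t) = t·S_n(t) − S_{n−1}(t)`, `S_1(t) = t`, `S_0(t) = 1`. -/
def chebS {A : Type*} [Ring A] : ℕ → A → A
  | 0, _ => 1
  | 1, t => t
  | n + 2, t => t * chebS (n + 1) t - chebS n t


section Chebyshev

open Finset

theorem eq_chebS_of_add_two {A : Type*} [Ring A] {s : ℕ → A} {t : A} (h0 : s 0 = 1)
    (h1 : s 1 = t) (h : ∀ n, s (n + 2) + s n = t * s (n + 1)) (n : ℕ) : s n = chebS n t := by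
  induction n using Nat.twoStepInduction with
  | zero => exact h0
  | one => exact h1
  | more n ih ih' => rw [chebS, ← ih, ← ih', ← h, add_sub_cancel_right]

theorem sum_antidiagonal_eq_chebS {A : Type*} [Ring A] {E : ℕ → ℕ → A} {a d : A}
    (h00 : E 0 0 = 1) (hm0 : ∀ m, E (m + 1) 0 = a * E m 0) (h0k : ∀ k, E 0 (k + 1) = d * E 0 k)
    (h : ∀ m k, a * E m (k + 1) + d * E (m + 1) k = E (m + 1) (k + 1) + E m k) (n : ℕ) :
    ∑ p ∈ antidiagonal n, E p.1 p.2 = chebS n (a + d) := by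
  refine eq_chebS_of_add_two (s := fun n ↦ ∑ p ∈ antidiagonal n, E p.1 p.2) ?_ ?_
    (fun n ↦ ?_) n
  · simp [h00]
  · simp [Nat.sum_antidiagonal_succ, hm0, h0k, h00, add_comm]
  · have hX : ∑ p ∈ antidiagonal (n + 1), E p.1 p.2
        = E (n + 1) 0 + ∑ p ∈ antidiagonal n, E p.1 (p.2 + 1) := Nat.sum_antidiagonal_succ'
    have hY : ∑ p ∈ antidiagonal (n + 1), E p.1 p.2
        = E 0 (n + 1) + ∑ p ∈ antidiagonal n, E (p.1 + 1) p.2 := Nat.sum_antidiagonal_succ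
    have hZ : ∑ p ∈ antidiagonal (n + 2), E p.1 p.2
        = E 0 (n + 2) + E (n + 2) 0 + ∑ p ∈ antidiagonal n, E (p.1 + 1) (p.2 + 1) := by
      rw [Nat.sum_antidiagonal_succ, Nat.sum_antidiagonal_succ']
      exact (add_assoc _ _ _).symm
    have hsum : ∑ p ∈ antidiagonal n, (a * E p.1 (p.2 + 1) + d * E (p.1 + 1) p.2)
        = ∑ p ∈ antidiagonal n, E (p.1 + 1) (p.2 + 1)
          + ∑ p ∈ antidiagonal n, E p.1 p.2 := by
      rw [← sum_add_distrib]
      exact sum_congr rfl fun p _ ↦ h p.1 p.2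
    calc ∑ p ∈ antidiagonal (n + 2), E p.1 p.2 + ∑ p ∈ antidiagonal n, E p.1 p.2
        = E 0 (n + 2) + E (n + 2) 0
          + ∑ p ∈ antidiagonal n, (a * E p.1 (p.2 + 1) + d * E (p.1 + 1) p.2) := by
          rw [hZ, hsum]
          abel
      _ = (a + d) * ∑ p ∈ antidiagonal (n + 1), E p.1 p.2 := by
          rw [add_mul]
          nth_rw 1 [hX]
          rw [hY, mul_add, mul_add, mul_sum, mul_sum, sum_add_distrib, ← hm0, ← h0k]
          abel

end Chebyshev

namespace QPlane

open Finsupp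

section Linear

variable {A : Type*} [Ring A]

noncomputable def linear (x y : A) : QPlane A := single (1, 0) x + single (0, 1) y

theorem linear_add (x y x' y' : A) : linear x y + linear x' y' = linear (x + x') (y + y') := by
  simp only [linear, single_add]
  abel

theorem linear_zero_left (y : A) : linear 0 y = single (0, 1) y := by
  simp [linear]

end Linear

variable {A : Type*} [Ring A] [Algebra ℂ A] (q : ℂ)

theorem smul_linear (z : ℂ) (x y : A) : z • linear x y = linear (z • x) (z • y) := by
  simp only [linear, smul_add, smul_single]

theorem qmul_single_single (p r : ℕ × ℕ) (α β : A) :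
    qmul q (single p α) (single r β) = single (p + r) (q ^ (p.2 * r.1) • (α * β)) := by
  simp only [qmul, mul_zero, smul_zero, single_zero, sum_single_index, zero_mul]
  rfl

@[simp] theorem qmul_zero_left (g : QPlane A) : qmul q 0 g = 0 := by
  simp [qmul]

@[simp] theorem qmul_zero_right (f : QPlane A) : qmul q f 0 = 0 := by
  simp [qmul]

theorem qmul_add_left (f g h : QPlane A) :
    qmul q (f + g) h = qmul q f h + qmul q g h := by
  refine sum_add_index' (fun _ ↦ by simp) fun p α β ↦ ?_
  simp only [add_mul, smul_add, single_add, sum_add]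

theorem qmul_add_right (f g h : QPlane A) :
    qmul q f (g + h) = qmul q f g + qmul q f h := by
  simp only [qmul, ← sum_add]
  congr
  funext p α
  exact sum_add_index' (fun _ ↦ by simp) fun r β γ ↦ by
    simp only [mul_add, smul_add, single_add]

theorem qmul_smul_left (z : ℂ) (f g : QPlane A) :
    qmul q (z • f) g = z • qmul q f g := by
  rw [qmul, sum_smul_index' (fun _ ↦ by simp)]
  simp only [qmul, smul_sum, smul_mul_assoc, smul_single, smul_comm z]

theorem qmul_smul_right (z : ℂ) (f g : QPlane A) :
    qmul q f (z • g) = z • qmul q f g := by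
  simp only [qmul, smul_sum]
  congr
  funext p α
  rw [sum_smul_index' (fun _ ↦ by simp)]
  simp only [mul_smul_comm, smul_single, smul_comm z]

theorem qmul_assoc (f g h : QPlane A) :
    qmul q (qmul q f g) h = qmul q f (qmul q g h) := by
  induction f using Finsupp.induction_linear with
  | zero => simp
  | add f f' hf hf' => simp only [qmul_add_left, hf, hf']
  | single p α =>
  induction g using Finsupp.induction_linear with
  | zero => simp
  | add g g' hg hg' => simp only [qmul_add_left, qmul_add_right, hg, hg']
  | single r β =>
  induction h using Finsupp.induction_linear with
  | zero => simp
  | add h h' hh hh' => simp only [qmul_add_right, hh, hh']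
  | single s γ =>
  simp only [qmul_single_single, smul_mul_assoc, mul_smul_comm, smul_smul, ← pow_add,
    mul_assoc, add_assoc, Prod.fst_add, Prod.snd_add]
  ring_nf

theorem qmul_one_left (f : QPlane A) : qmul q (single (0, 0) 1) f = f := by
  induction f using Finsupp.induction_linear with
  | zero => simp
  | add f g hf hg => rw [qmul_add_right, hf, hg]
  | single r β => simp [qmul_single_single, Prod.mk_zero_zero]

theorem qmul_one_right (f : QPlane A) : qmul q f (single (0, 0) 1) = f := by
  induction f using Finsupp.induction_linear with
  | zero => simp
  | add f g hf hg => rw [qmul_add_left, hf, hg]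
  | single r β => simp [qmul_single_single, Prod.mk_zero_zero]

theorem qpow_zero (f : QPlane A) : qpow q f 0 = single (0, 0) 1 := rfl

theorem qpow_succ (f : QPlane A) (m : ℕ) : qpow q f (m + 1) = qmul q f (qpow q f m) := rfl

theorem smul_qmul_qpow_of_smul_qmul {z w : ℂ} {f g h : QPlane A}
    (H : z • qmul q h f = w • qmul q g h) (m : ℕ) :
    z ^ m • qmul q h (qpow q f m) = w ^ m • qmul q (qpow q g m) h := by
  induction m with
  | zero => simp [qpow_zero, qmul_one_left, qmul_one_right]
  | succ m ih =>
    calc z ^ (m + 1) • qmul q h (qpow q f (m + 1))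
        = z ^ m • qmul q (z • qmul q h f) (qpow q f m) := by
          rw [qpow_succ, qmul_smul_left, ← qmul_assoc, smul_smul, pow_succ]
      _ = w • qmul q g (z ^ m • qmul q h (qpow q f m)) := by
          rw [H, qmul_smul_left, qmul_assoc, qmul_smul_right, smul_comm]
      _ = w ^ (m + 1) • qmul q (qpow q g (m + 1)) h := by
          rw [ih, qmul_smul_right, smul_smul, ← pow_succ', qpow_succ, qmul_assoc]

theorem qmul_qpow_of_qmul_eq {f g h : QPlane A} (H : qmul q h f = qmul q g h) (m : ℕ) :
    qmul q h (qpow q f m) = qmul q (qpow q g m) h := by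
  have := smul_qmul_qpow_of_smul_qmul q
    ((one_smul ℂ (qmul q h f)).trans (H.trans (one_smul ℂ _).symm)) m
  rwa [one_pow, one_smul, one_smul] at this

theorem qpow_succ' (f : QPlane A) (m : ℕ) : qpow q f (m + 1) = qmul q (qpow q f m) f :=
  qmul_qpow_of_qmul_eq q rfl m

theorem qmul_single_apply_add (s p : ℕ × ℕ) (x : A) (f : QPlane A) :
    qmul q (single s x) f (s + p) = q ^ (s.2 * p.1) • (x * f p) := by
  induction f using Finsupp.induction_linear with
  | zero => simp
  | add f g hf hg => simp [qmul_add_right, hf, hg, mul_add]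
  | single r β =>
    rcases eq_or_ne r p with rfl | hr <;> simp [qmul_single_single, *]

theorem qmul_single_apply_of_not_le {s p : ℕ × ℕ} (h : ¬ s ≤ p) (x : A) (f : QPlane A) :
    qmul q (single s x) f p = 0 := by
  induction f using Finsupp.induction_linear with
  | zero => simp
  | add f g hf hg => simp [qmul_add_right, hf, hg]
  | single r β =>
    rw [qmul_single_single, single_eq_of_ne]
    rintro rfl
    exact h le_self_add

theorem qmul_single_zero_apply (x : A) (f : QPlane A) (p : ℕ × ℕ) :
    qmul q (single (0, 0) x) f p = x * f p := by
  simpa [Prod.mk_zero_zero] using qmul_single_apply_add q (0, 0) p x f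

theorem qmul_single_zero_one_apply (f : QPlane A) (i j : ℕ) :
    qmul q (single (0, 1) 1) f (i, j + 1) = q ^ i • f (i, j) := by
  simpa [add_comm 1 j] using qmul_single_apply_add q (0, 1) (i, j) (1 : A) f

theorem qmul_linear_apply_succ_succ (x y : A) (f : QPlane A) (i j : ℕ) :
    qmul q (linear x y) f (i + 1, j + 1)
      = x * f (i, j + 1) + q ^ (i + 1) • (y * f (i + 1, j)) := by
  have hX := qmul_single_apply_add q (1, 0) (i, j + 1) x f
  have hY := qmul_single_apply_add q (0, 1) (i + 1, j) y f
  simp only [Prod.mk_add_mk, zero_add, one_mul, zero_mul, pow_zero, one_smul, add_comm 1]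
    at hX hY
  rw [linear, qmul_add_left, Finsupp.add_apply, hX, hY]

theorem qmul_linear_apply_succ_zero (x y : A) (f : QPlane A) (i : ℕ) :
    qmul q (linear x y) f (i + 1, 0) = x * f (i, 0) := by
  have hX := qmul_single_apply_add q (1, 0) (i, 0) x f
  simp only [Prod.mk_add_mk, zero_add, zero_mul, pow_zero, one_smul, add_comm 1 i] at hX
  rw [linear, qmul_add_left, Finsupp.add_apply, hX,
    qmul_single_apply_of_not_le q (by simp [Prod.mk_le_mk]), add_zero]

theorem qmul_linear_apply_zero_succ (x y : A) (f : QPlane A) (j : ℕ) :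
    qmul q (linear x y) f (0, j + 1) = y * f (0, j) := by
  have hY := qmul_single_apply_add q (0, 1) (0, j) y f
  simp only [Prod.mk_add_mk, zero_add, mul_zero, pow_zero, one_smul, add_comm 1 j] at hY
  rw [linear, qmul_add_left, Finsupp.add_apply, hY,
    qmul_single_apply_of_not_le q (by simp [Prod.mk_le_mk]), zero_add]

theorem qmul_single_zero_linear (x y z : A) :
    qmul q (single (0, 0) x) (linear y z) = linear (x * y) (x * z) := by
  simp [linear, qmul_add_right, qmul_single_single, Prod.mk_zero_zero]

theorem qmul_linear_single_zero (x y z : A) :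
    qmul q (linear x y) (single (0, 0) z) = linear (x * z) (y * z) := by
  simp [linear, qmul_add_left, qmul_single_single, Prod.mk_zero_zero]

theorem qmul_linear_linear (x y z w : A) :
    qmul q (linear x y) (linear z w)
      = single (2, 0) (x * z) + single (1, 1) (x * w + q • (y * z)) + single (0, 2) (y * w) := by
  simp only [linear, qmul_add_left, qmul_add_right, qmul_single_single, single_add,
    Prod.mk_add_mk, Nat.reduceAdd, mul_zero, mul_one, pow_zero, pow_one, one_smul]
  abel

theorem qmul_single_zero_one_linear (x y : A) :
    qmul q (single (0, 1) 1) (linear x y) = qmul q (linear (q • x) y) (single (0, 1) 1) := by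
  simp only [← linear_zero_left, qmul_linear_linear]
  simp

section Relations

variable {q} {a b c d : A}

theorem smul_qmul_single_linear_self (hba : b * a = q • (a * b)) :
    q • qmul q (single (0, 0) a) (linear a b)
      = qmul q (linear (q • a) b) (single (0, 0) a) := by
  rw [qmul_single_zero_linear, qmul_linear_single_zero, smul_linear, hba, smul_mul_assoc]

theorem qmul_single_linear_eq (hca : c * a = q • (a * c)) (hbc : b * c = c * b) :
    qmul q (single (0, 0) c) (linear a b) = qmul q (linear (q • a) b) (single (0, 0) c) := by
  rw [qmul_single_zero_linear, qmul_linear_single_zero, hca, hbc, smul_mul_assoc]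

theorem qmul_linear_linear_comm (hq : q ≠ 0) (hca : c * a = q • (a * c))
    (hdb : d * b = q • (b * d)) (hbc : b * c = c * b)
    (hdet' : a * d - q⁻¹ • (b * c) = d * a - q • (b * c)) :
    qmul q (linear c d) (linear a b) = q • qmul q (linear a b) (linear c d) := by
  have hda : q • (d * a) = q • (a * d) + q • q • (b * c) - b * c := by
    rw [← sub_add_cancel (d * a) (q • (b * c)), ← hdet', smul_add, smul_sub, smul_smul,
      mul_inv_cancel₀ hq, one_smul]
    abel
  simp only [qmul_linear_linear, smul_add, smul_single]
  rw [hca, hdb, ← hbc, hda]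
  abel_nf

theorem smul_qmul_single_linear_eq (hq : q ≠ 0) (hca : c * a = q • (a * c))
    (hbc : b * c = c * b) (hdet : a * d - q⁻¹ • (b * c) = 1) :
    q • qmul q (single (0, 0) a) (linear c d)
      = qmul q (single (0, 0) c) (linear a b) + q • single (0, 1) 1 := by
  have had : q • (a * d) = c * b + q • 1 := by
    rw [← sub_eq_iff_eq_add', ← hbc, ← hdet, smul_sub, smul_smul, mul_inv_cancel₀ hq,
      one_smul]
  rw [qmul_single_zero_linear, qmul_single_zero_linear, smul_linear, smul_single,
    ← linear_zero_left, linear_add, had, hca, add_zero]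

end Relations

noncomputable def diagCoeff (a b c d : A) (m k : ℕ) : A :=
  qmul q (qpow q (linear a b) m) (qpow q (linear c d) k) (m, k)

open Finset in
theorem traceRho_eq_sum_antidiagonal (a b c d : A) (n : ℕ) :
    traceRho q a b c d n = ∑ p ∈ antidiagonal n, diagCoeff q a b c d p.1 p.2 := by
  rw [← Nat.sum_antidiagonal_swap]
  exact (Nat.sum_antidiagonal_eq_sum_range_succ (fun i j ↦ diagCoeff q a b c d j i) n).symm

section Diagonal

variable {q} {a b c d : A}

theorem diagCoeff_zero_zero : diagCoeff q a b c d 0 0 = 1 := by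
  simp [diagCoeff, qpow_zero, qmul_one_left]

theorem diagCoeff_succ_zero (m : ℕ) :
    diagCoeff q a b c d (m + 1) 0 = a * diagCoeff q a b c d m 0 := by
  rw [diagCoeff, qpow_succ, qmul_assoc, qmul_linear_apply_succ_zero, diagCoeff]

theorem diagCoeff_zero_succ (k : ℕ) :
    diagCoeff q a b c d 0 (k + 1) = d * diagCoeff q a b c d 0 k := by
  simp only [diagCoeff, qpow_zero, qmul_one_left, qpow_succ, qmul_linear_apply_zero_succ]

theorem diagCoeff_of_q_eq_zero (m k : ℕ) : diagCoeff 0 a b c d m k = a ^ m * d ^ k := by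
  induction m generalizing k with
  | zero =>
    induction k with
    | zero => simp [diagCoeff_zero_zero]
    | succ k ih => rw [diagCoeff_zero_succ, ih, pow_zero, one_mul, one_mul, pow_succ']
  | succ m ih =>
    rcases k with _ | k
    · rw [diagCoeff_succ_zero, ih, ← mul_assoc, pow_succ']
    · rw [diagCoeff, qpow_succ, qmul_assoc, qmul_linear_apply_succ_succ, zero_pow m.succ_ne_zero,
        zero_smul, add_zero, ← diagCoeff, ih, ← mul_assoc, ← pow_succ' a]

theorem qmul_linear_qpow_qpow (hq : q ≠ 0) (hca : c * a = q • (a * c))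
    (hdb : d * b = q • (b * d)) (hbc : b * c = c * b)
    (hdet' : a * d - q⁻¹ • (b * c) = d * a - q • (b * c)) (m k : ℕ) :
    qmul q (linear c d) (qmul q (qpow q (linear a b) m) (qpow q (linear c d) k))
      = q ^ m • qmul q (qpow q (linear a b) m) (qpow q (linear c d) (k + 1)) := by
  have hQ := smul_qmul_qpow_of_smul_qmul q
    ((one_smul ℂ _).trans (qmul_linear_linear_comm hq hca hdb hbc hdet')) m
  rw [one_pow, one_smul] at hQ
  rw [← qmul_assoc, hQ, qmul_smul_left, qmul_assoc, qpow_succ]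

theorem smul_qmul_single_qpow_qpow (hq : q ≠ 0) (hba : b * a = q • (a * b))
    (hca : c * a = q • (a * c)) (hbc : b * c = c * b) (hdet : a * d - q⁻¹ • (b * c) = 1)
    (m k : ℕ) :
    q ^ (m + 1) •
        qmul q (single (0, 0) a) (qmul q (qpow q (linear a b) m) (qpow q (linear c d) (k + 1)))
      = qmul q (single (0, 0) c) (qmul q (qpow q (linear a b) (m + 1)) (qpow q (linear c d) k))
        + q • qmul q (single (0, 1) 1)
            (qmul q (qpow q (linear a b) m) (qpow q (linear c d) k)) := by
  set P := linear a b
  set Q := linear c d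
  set P' := linear (q • a) b
  have hA := smul_qmul_qpow_of_smul_qmul q
    ((smul_qmul_single_linear_self hba).trans (one_smul ℂ _).symm) m
  have hC := qmul_qpow_of_qmul_eq q (qmul_single_linear_eq hca hbc) (m + 1)
  have hY := qmul_qpow_of_qmul_eq q (qmul_single_zero_one_linear q a b) m
  rw [one_pow, one_smul] at hA
  calc q ^ (m + 1) • qmul q (single (0, 0) a) (qmul q (qpow q P m) (qpow q Q (k + 1)))
      = q • qmul q (q ^ m • qmul q (single (0, 0) a) (qpow q P m)) (qpow q Q (k + 1)) := by
        rw [qmul_smul_left, smul_smul, ← pow_succ', qmul_assoc]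
    _ = qmul q (qpow q P' m) (qmul q (q • qmul q (single (0, 0) a) Q) (qpow q Q k)) := by
        rw [hA, qmul_assoc, qpow_succ, qmul_smul_left, qmul_smul_right, qmul_assoc]
    _ = qmul q (qmul q (qpow q P' (m + 1)) (single (0, 0) c)) (qpow q Q k)
          + q • qmul q (qmul q (qpow q P' m) (single (0, 1) 1)) (qpow q Q k) := by
        rw [smul_qmul_single_linear_eq hq hca hbc hdet, qmul_add_left, qmul_add_right,
          qmul_smul_left, qmul_smul_right, qmul_single_linear_eq hca hbc, qpow_succ']
        simp only [qmul_assoc]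
        rfl
    _ = _ := by rw [← hC, ← hY, qmul_assoc, qmul_assoc]

theorem diagCoeff_recurrence_of_ne_zero (hq : q ≠ 0) (hba : b * a = q • (a * b))
    (hca : c * a = q • (a * c)) (hdb : d * b = q • (b * d)) (hbc : b * c = c * b)
    (hdet : a * d - q⁻¹ • (b * c) = 1)
    (hdet' : a * d - q⁻¹ • (b * c) = d * a - q • (b * c)) (m k : ℕ) :
    a * diagCoeff q a b c d m (k + 1) + d * diagCoeff q a b c d (m + 1) k
      = diagCoeff q a b c d (m + 1) (k + 1) + diagCoeff q a b c d m k := by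
  -- the two identities share the term `c * (P^(m+1) Q^k)(m, k+1)`, which cancels in the sum
  have hA := congrArg (· (m, k + 1)) (smul_qmul_single_qpow_qpow hq hba hca hbc hdet m k)
  have hB := congrArg (· (m + 1, k + 1)) (qmul_linear_qpow_qpow hq hca hdb hbc hdet' (m + 1) k)
  simp only [Finsupp.smul_apply, Finsupp.add_apply, qmul_single_zero_apply,
    qmul_single_zero_one_apply, qmul_linear_apply_succ_succ] at hA hB
  apply smul_right_injective A (pow_ne_zero (m + 1) hq)
  simp only [diagCoeff, smul_add]
  rw [hA, ← hB, smul_smul, ← pow_succ']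
  abel

theorem diagCoeff_recurrence_of_eq_zero (hda : d * a = 1) (m k : ℕ) :
    a * diagCoeff 0 a b c d m (k + 1) + d * diagCoeff 0 a b c d (m + 1) k
      = diagCoeff 0 a b c d (m + 1) (k + 1) + diagCoeff 0 a b c d m k := by
  simp only [diagCoeff_of_q_eq_zero]
  rw [← mul_assoc, ← pow_succ', pow_succ' a m, ← mul_assoc, ← mul_assoc, hda, one_mul]

theorem diagCoeff_recurrence (hba : b * a = q • (a * b))
    (hca : c * a = q • (a * c)) (hdb : d * b = q • (b * d)) (hbc : b * c = c * b)
    (hdet : a * d - q⁻¹ • (b * c) = 1)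
    (hdet' : a * d - q⁻¹ • (b * c) = d * a - q • (b * c)) (m k : ℕ) :
    a * diagCoeff q a b c d m (k + 1) + d * diagCoeff q a b c d (m + 1) k
      = diagCoeff q a b c d (m + 1) (k + 1) + diagCoeff q a b c d m k := by
  rcases eq_or_ne q 0 with rfl | hq
  · exact diagCoeff_recurrence_of_eq_zero (by simpa using hdet'.symm.trans hdet) m k
  · exact diagCoeff_recurrence_of_ne_zero hq hba hca hdb hbc hdet hdet' m k

end Diagonal

end QPlane

theorem traceRho_eq_chebS_general {A : Type*} [Ring A] [Algebra ℂ A] (q : ℂ) (a b c d : A)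
    (hba : b * a = q • (a * b)) (hca : c * a = q • (a * c))
    (hdb : d * b = q • (b * d))
    (hbc : b * c = c * b)
    (hdet : a * d - q⁻¹ • (b * c) = 1)
    (hdet' : a * d - q⁻¹ • (b * c) = d * a - q • (b * c)) (n : ℕ) :
    traceRho q a b c d n = chebS n (a + d) := by
  rw [QPlane.traceRho_eq_sum_antidiagonal]
  exact sum_antidiagonal_eq_chebS QPlane.diagCoeff_zero_zero QPlane.diagCoeff_succ_zero
    QPlane.diagCoeff_zero_succ (QPlane.diagCoeff_recurrence hba hca hdb hbc hdet hdet') n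

/-- For `(a, b; c, d) ∈ SL₂^q(A)`, the trace of `ρ_n` equals `S_n(a + d)`. -/
theorem traceRho_eq_chebS {A : Type*} [Ring A] [Algebra ℂ A] (q : ℂ) (a b c d : A)
    (hba : b * a = q • (a * b)) (hca : c * a = q • (a * c))
    (hdb : d * b = q • (b * d)) (hdc : d * c = q • (c * d))
    (hbc : b * c = c * b)
    (hdet : a * d - q⁻¹ • (b * c) = 1)
    (hdet' : a * d - q⁻¹ • (b * c) = d * a - q • (b * c)) (n : ℕ) :
    traceRho q a b c d n = chebS n (a + d) :=
  traceRho_eq_chebS_general q a b c d hba hca hdb hbc hdet hdet' n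
end
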